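/- Let K, D, λ be positive integers such that λ divides D and D + λ divides K; set p = D/λ and n = K/(D+λ). Consider the index coding problem over GF(2) where receiver R_k demands x_k and has side information {x_{k+λ}, x_{k+2λ}, ..., x_{k+D}} (indices mod K in {1,...,K}). Then the code consisting of the λ·((K−D)/λ) = K − D symbols x_{i+jλ} + x_{i+(j+1)λ} + ... + x_{i+(j+p)λ} for i = 1,...,λ and j = 0,1,...,(K−D−λ)/λ allows every receiver to decode its demanded message; in particular each receiver R_k with k ≤ K − D decodes from a single broadcast symbol. -/
import Mathlib

/-- Standard basis vector over GF(2) for message index `k` (messages indexed by `ZMod K`,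
i.e. index arithmetic is modulo `K`). -/
def e (K : ℕ) (k : ZMod K) : ZMod K → ZMod 2 := Pi.single k 1

/-- Receiver `k` can decode its demanded message `x_k`: the demand vector lies in the GF(2)-span
of the broadcast code symbols `C` together with its side-information messages `side`. -/
def Decodes (K : ℕ) (C : Set (ZMod K → ZMod 2)) (side : Set (ZMod K)) (k : ZMod K) : Prop :=
  e K k ∈ Submodule.span (ZMod 2) (C ∪ e K '' side)

/-- A 0-1 matrix over GF(2) fits the directed graph with edge relation `E`:
unit diagonal, and zero outside the diagonal and edge set. -/
def Fits {V : Type*} (E : V → V → Prop) (A : Matrix V V (ZMod 2)) : Prop :=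
  (∀ i, A i i = 1) ∧ ∀ i j, i ≠ j → ¬ E i j → A i j = 0

/-! ### Auxiliary machinery -/

private lemma addself {K : ℕ} (v : ZMod K → ZMod 2) : v + v = 0 := by
  funext x; exact CharTwo.add_self_eq_zero _

/-- message-vector in residue class `i`, at position `u` -/
private def G (K lam i : ℕ) : ℕ → (ZMod K → ZMod 2) :=
  fun u => e K ((i + u * lam : ℕ) : ZMod K)

/-- code symbol -/
private def Csym (K lam p i j : ℕ) : ZMod K → ZMod 2 :=
  ∑ t ∈ Finset.range (p + 1), G K lam i (j + t)

private lemma Csym_def (K lam p i j : ℕ) :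
    Csym K lam p i j = ∑ t ∈ Finset.range (p + 1), G K lam i (j + t) := rfl

private lemma tile {V : Type*} [AddCommMonoid V] (g : ℕ → V) (q : ℕ) (s : ℕ) :
    ∀ N : ℕ, ∑ a ∈ Finset.range N, ∑ t ∈ Finset.range q, g (s + a * q + t)
      = ∑ u ∈ Finset.range (N * q), g (s + u) := by
  intro N
  induction N with
  | zero => simp
  | succ N ih =>
    rw [Finset.sum_range_succ, ih, Nat.succ_mul, Finset.sum_range_add]
    congr 1
    refine Finset.sum_congr rfl fun t _ => ?_
    congr 1
    ring

private lemma decodes_mono {K : ℕ} {C C' : Set (ZMod K → ZMod 2)} {side : Set (ZMod K)}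
    {k : ZMod K} (h : C ⊆ C') (hd : Decodes K C side k) : Decodes K C' side k :=
  Submodule.span_mono (Set.union_subset_union_left _ h) hd

/-- the easy case: decoding from a single symbol -/
private lemma easy (K lam p i m k : ℕ) (hk : k = i + m * lam)
    (side : Set (ZMod K))
    (hside : ∀ t : ℕ, 1 ≤ t → t ≤ p → ((k + t * lam : ℕ) : ZMod K) ∈ side) :
    Decodes K {Csym K lam p i m} side (k : ZMod K) := by
  have hsum : e K (k : ZMod K) = Csym K lam p i m
      + ∑ u ∈ Finset.range p, e K ((k + (u + 1) * lam : ℕ) : ZMod K) := by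
    have h1 : Csym K lam p i m
        = (∑ u ∈ Finset.range p, e K ((k + (u + 1) * lam : ℕ) : ZMod K))
          + e K (k : ZMod K) := by
      rw [Csym_def, Finset.sum_range_succ']
      congr 1
      · refine Finset.sum_congr rfl fun u _ => ?_
        show e K ((i + (m + (u + 1)) * lam : ℕ) : ZMod K) = _
        rw [show i + (m + (u + 1)) * lam = k + (u + 1) * lam by rw [hk]; ring]
      · show e K ((i + (m + 0) * lam : ℕ) : ZMod K) = _
        rw [show i + (m + 0) * lam = k by rw [hk]; ring]
    linear_combination -h1
      - addself (∑ u ∈ Finset.range p, e K ((k + (u + 1) * lam : ℕ) : ZMod K))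
  unfold Decodes
  rw [hsum]
  refine Submodule.add_mem _ (Submodule.subset_span (Or.inl rfl)) ?_
  refine Submodule.sum_mem _ fun u hu => Submodule.subset_span (Or.inr ?_)
  exact ⟨_, hside (u + 1) (by omega) (by have := Finset.mem_range.mp hu; omega), rfl⟩

/-- the hard case: `m > J`; decode using the `n` disjoint tiling symbols together with
`n-1` shifted symbols. -/
private lemma hard (K lam p n' J i m k : ℕ) (hJ : J = n' * (p + 1))
    (hK : K = (J + (p + 1)) * lam)
    (hJm : J < m) (hm2 : m < J + (p + 1)) (hk : k = i + m * lam)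
    (C : Set (ZMod K → ZMod 2)) (side : Set (ZMod K))
    (hC : ∀ j : ℕ, j ≤ J → Csym K lam p i j ∈ C)
    (hside : ∀ t : ℕ, 1 ≤ t → t ≤ p → ((k + t * lam : ℕ) : ZMod K) ∈ side) :
    Decodes K C side (k : ZMod K) := by
  set d := m - J with hd
  set r := J + p - m with hr
  have hdp : d ≤ p := by omega
  -- Identity A : sum of the n disjoint-tiling symbols = sum over the whole class
  have hA : ∑ a ∈ Finset.range (n' + 1), Csym K lam p i (a * (p + 1))
      = ∑ u ∈ Finset.range (J + (p + 1)), G K lam i u := by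
    have t1 := tile (G K lam i) (p + 1) 0 (n' + 1)
    calc ∑ a ∈ Finset.range (n' + 1), Csym K lam p i (a * (p + 1))
        = ∑ a ∈ Finset.range (n' + 1), ∑ t ∈ Finset.range (p + 1),
            G K lam i (0 + a * (p + 1) + t) := by
          refine Finset.sum_congr rfl fun a _ => ?_
          rw [Csym_def]
          refine Finset.sum_congr rfl fun t _ => ?_
          congr 1; ring
      _ = ∑ u ∈ Finset.range ((n' + 1) * (p + 1)), G K lam i (0 + u) := t1
      _ = ∑ u ∈ Finset.range (J + (p + 1)), G K lam i u := by
          rw [show (n' + 1) * (p + 1) = J + (p + 1) by rw [hJ]; ring]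
          exact Finset.sum_congr rfl fun u _ => by rw [Nat.zero_add]
  -- Identity B : the n-1 shifted symbols cover positions d .. d+J-1
  have hB : ∑ a ∈ Finset.range n', Csym K lam p i (d + a * (p + 1))
      = ∑ u ∈ Finset.range J, G K lam i (d + u) := by
    have t1 := tile (G K lam i) (p + 1) d n'
    calc ∑ a ∈ Finset.range n', Csym K lam p i (d + a * (p + 1))
        = ∑ a ∈ Finset.range n', ∑ t ∈ Finset.range (p + 1),
            G K lam i (d + a * (p + 1) + t) := by
          exact Finset.sum_congr rfl fun a _ => by rw [Csym_def]
      _ = ∑ u ∈ Finset.range (n' * (p + 1)), G K lam i (d + u) := t1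
      _ = _ := by rw [← hJ]
  -- decomposition of the whole class sum
  have hsplit : ∑ u ∈ Finset.range (J + (p + 1)), G K lam i u
      = (∑ u ∈ Finset.range d, G K lam i u)
        + ((∑ u ∈ Finset.range J, G K lam i (d + u))
          + (G K lam i m + ∑ u ∈ Finset.range r, G K lam i (m + 1 + u))) := by
    rw [show J + (p + 1) = d + (J + (1 + r)) by omega, Finset.sum_range_add,
      Finset.sum_range_add, Finset.sum_range_add]
    congr 1
    congr 1
    congr 1
    · rw [Finset.sum_range_one, show d + (J + 0) = m by omega]
    · exact Finset.sum_congr rfl fun u _ =>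
        by rw [show d + (J + (1 + u)) = m + 1 + u by omega]
  have hek : e K (k : ZMod K) = G K lam i m := by rw [hk]; rfl
  -- the final identity
  have hfinal : e K (k : ZMod K)
      = (∑ a ∈ Finset.range (n' + 1), Csym K lam p i (a * (p + 1)))
        + (∑ a ∈ Finset.range n', Csym K lam p i (d + a * (p + 1)))
        + ((∑ u ∈ Finset.range d, G K lam i u)
          + ∑ u ∈ Finset.range r, G K lam i (m + 1 + u)) := by
    rw [hek, hA, hB, hsplit]
    have h1 := addself (∑ u ∈ Finset.range d, G K lam i u)
    have h2 := addself (∑ u ∈ Finset.range J, G K lam i (d + u))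
    have h3 := addself (∑ u ∈ Finset.range r, G K lam i (m + 1 + u))
    linear_combination -h1 - h2 - h3
  unfold Decodes
  rw [hfinal]
  refine Submodule.add_mem _ (Submodule.add_mem _ ?_ ?_) (Submodule.add_mem _ ?_ ?_)
  · refine Submodule.sum_mem _ fun a ha => Submodule.subset_span (Or.inl (hC _ ?_))
    have ha' : a ≤ n' := by have := Finset.mem_range.mp ha; omega
    calc a * (p + 1) ≤ n' * (p + 1) := mul_le_mul_left ha' _
      _ = J := hJ.symm
  · refine Submodule.sum_mem _ fun a ha => Submodule.subset_span (Or.inl (hC _ ?_))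
    have ha' : a + 1 ≤ n' := by have := Finset.mem_range.mp ha; omega
    have hw : a * (p + 1) + (p + 1) ≤ J := by
      calc a * (p + 1) + (p + 1) = (a + 1) * (p + 1) := by ring
        _ ≤ n' * (p + 1) := mul_le_mul_left ha' _
        _ = J := hJ.symm
    omega
  · -- left block: wrapped side information
    refine Submodule.sum_mem _ fun u hu => Submodule.subset_span (Or.inr ?_)
    have hu' : u < d := Finset.mem_range.mp hu
    set t := u + (p + 1 - d) with ht
    have hnat : k + t * lam = (i + u * lam) + K := by
      have hm' : m + t = u + (J + (p + 1)) := by omega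
      calc k + t * lam = i + (m + t) * lam := by rw [hk]; ring
        _ = i + (u + (J + (p + 1))) * lam := by rw [hm']
        _ = (i + u * lam) + K := by rw [hK]; ring
    have hcast : ((k + t * lam : ℕ) : ZMod K) = ((i + u * lam : ℕ) : ZMod K) := by
      rw [hnat]; push_cast [ZMod.natCast_self]; ring
    refine ⟨_, hside t (by omega) (by omega), ?_⟩
    show e K ((k + t * lam : ℕ) : ZMod K) = G K lam i u
    rw [hcast]; rfl
  · -- right block: unwrapped side information
    refine Submodule.sum_mem _ fun u hu => Submodule.subset_span (Or.inr ?_)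
    have hu' : u < r := Finset.mem_range.mp hu
    refine ⟨_, hside (u + 1) (by omega) (by omega), ?_⟩
    show e K ((k + (u + 1) * lam : ℕ) : ZMod K) = G K lam i (m + 1 + u)
    rw [show k + (u + 1) * lam = i + (m + 1 + u) * lam by rw [hk]; ring]
    rfl

/-- Case VII code of `K-D` symbols; every receiver decodes, and receivers
`k ≤ K-D` decode from a single symbol. -/
theorem stmt7 (K D lam p : ℕ) (hlam : 0 < lam) (hl : lam ∣ D) (hdvd : (D + lam) ∣ K)
    (hp : p = D / lam) :
    (∀ k : ℕ, 1 ≤ k → k ≤ K →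
      Decodes K
        {v | ∃ i j : ℕ, 1 ≤ i ∧ i ≤ lam ∧ j ≤ (K - D - lam) / lam ∧
          v = ∑ t ∈ Finset.range (p + 1), e K ((i + (j + t) * lam : ℕ) : ZMod K)}
        {j | ∃ t : ℕ, 1 ≤ t ∧ t ≤ p ∧ j = ((k + t * lam : ℕ) : ZMod K)}
        ((k : ℕ) : ZMod K)) ∧
    (∀ k : ℕ, 1 ≤ k → k ≤ K - D →
      ∃ c ∈ {v | ∃ i j : ℕ, 1 ≤ i ∧ i ≤ lam ∧ j ≤ (K - D - lam) / lam ∧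
          v = ∑ t ∈ Finset.range (p + 1), e K ((i + (j + t) * lam : ℕ) : ZMod K)},
        Decodes K {c}
          {j | ∃ t : ℕ, 1 ≤ t ∧ t ≤ p ∧ j = ((k + t * lam : ℕ) : ZMod K)}
          ((k : ℕ) : ZMod K)) := by
  have hD : D = p * lam := by rw [hp, Nat.div_mul_cancel hl]
  obtain ⟨n, hKn⟩ := hdvd
  -- common setup, valid whenever some k with 1 ≤ k ≤ K exists (so K > 0)
  have setup : ∀ k : ℕ, 1 ≤ k → k ≤ K →
      ∃ n' i m : ℕ, K = (n' * (p + 1) + (p + 1)) * lam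
        ∧ (K - D - lam) / lam = n' * (p + 1)
        ∧ K - D = (n' * (p + 1) + 1) * lam
        ∧ 1 ≤ i ∧ i ≤ lam ∧ m < n' * (p + 1) + (p + 1) ∧ k = i + m * lam := by
    intro k hk1 hk2
    have hKpos : 0 < K := by omega
    have hn : 0 < n := by
      rcases Nat.eq_zero_or_pos n with h | h
      · subst h; simp at hKn; omega
      · exact h
    set n' := n - 1 with hn'
    have hK' : K = (n' * (p + 1) + (p + 1)) * lam := by
      rw [hKn, hD, show n = n' + 1 by omega]; ring
    have hJs : (K - D - lam) / lam = n' * (p + 1) := by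
      have h1 : K - D - lam = n' * (p + 1) * lam := by
        rw [hK', hD, show (n' * (p + 1) + (p + 1)) * lam
            = n' * (p + 1) * lam + lam + p * lam by ring,
          Nat.add_sub_cancel, Nat.add_sub_cancel]
      rw [h1, Nat.mul_div_cancel _ hlam]
    have hKD : K - D = (n' * (p + 1) + 1) * lam := by
      rw [hK', hD, show (n' * (p + 1) + (p + 1)) * lam
          = (n' * (p + 1) + 1) * lam + p * lam by ring, Nat.add_sub_cancel]
    obtain ⟨i, m, hi1, hi2, hki⟩ :
        ∃ i m : ℕ, 1 ≤ i ∧ i ≤ lam ∧ k = i + m * lam := by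
      refine ⟨(k - 1) % lam + 1, (k - 1) / lam, by omega, ?_, ?_⟩
      · have := Nat.mod_lt (k - 1) hlam
        omega
      · have h2 := Nat.mod_add_div (k - 1) lam
        rw [mul_comm] at h2
        omega
    have hmlt : m < n' * (p + 1) + (p + 1) := by
      by_contra hcon
      push_neg at hcon
      have h3 : (n' * (p + 1) + (p + 1)) * lam ≤ m * lam := mul_le_mul_left hcon _
      omega
    exact ⟨n', i, m, hK', hJs, hKD, hi1, hi2, hmlt, hki⟩
  constructor
  · -- every receiver decodes
    intro k hk1 hk2
    obtain ⟨n', i, m, hK', hJs, hKD, hi1, hi2, hmlt, hki⟩ := setup k hk1 hk2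
    have hside : ∀ t : ℕ, 1 ≤ t → t ≤ p →
        ((k + t * lam : ℕ) : ZMod K) ∈
          {j | ∃ t : ℕ, 1 ≤ t ∧ t ≤ p ∧ j = ((k + t * lam : ℕ) : ZMod K)} :=
      fun t h1 h2 => ⟨t, h1, h2, rfl⟩
    by_cases hm : m ≤ n' * (p + 1)
    · refine decodes_mono ?_ (easy K lam p i m k hki _ hside)
      intro c hc
      rw [Set.mem_singleton_iff] at hc
      subst hc
      exact ⟨i, m, hi1, hi2, by rw [hJs]; exact hm, rfl⟩
    · refine hard K lam p n' (n' * (p + 1)) i m k rfl hK' (by omega) hmlt hki _ _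
        (fun j hj => ⟨i, j, hi1, hi2, by rw [hJs]; exact hj, rfl⟩) hside
  · -- receivers k ≤ K - D decode from a single symbol
    intro k hk1 hk2
    obtain ⟨n', i, m, hK', hJs, hKD, hi1, hi2, hmlt, hki⟩ :=
      setup k hk1 (by omega)
    have hm : m ≤ n' * (p + 1) := by
      by_contra hcon
      push_neg at hcon
      have h3 : (n' * (p + 1) + 1) * lam ≤ m * lam := mul_le_mul_left (by omega) _
      omega
    exact ⟨Csym K lam p i m, ⟨i, m, hi1, hi2, by rw [hJs]; exact hm, rfl⟩,
      easy K lam p i m k hki _ (fun t h1 h2 => ⟨t, h1, h2, rfl⟩)⟩
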